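/- arXiv:2512.01796 — 3 statements merged into one kernel-verified Lean document; each statement's English description precedes it below -/
import Mathlib

section
/- For every x_j ∈ [0,1], the left-region maximal payoff satisfies U_i(x_j/3, x_j) = ∫_{x_j/3}^{x_j} c(b) db − 2 ∫₀^{x_j/3} c(b) db, i.e. U_i(x_j/3, x_j) = F(x_j/3). -/
open MeasureTheory Set

/-- The wage the benefactor at `b` pays: the upper envelope of the two
politicians' policy-production costs. -/
noncomputable def w (c : ℝ → ℝ) (x₁ x₂ b : ℝ) : ℝ :=
  max (c |x₁ - b|) (c |x₂ - b|)

/-- Politician `i`'s expected utility when she locates at `xi` and the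
opponent at `xj`, benefactors being uniform on `[0,1]`. -/
noncomputable def U (c : ℝ → ℝ) (xi xj : ℝ) : ℝ :=
  ∫ b in (0:ℝ)..1, (w c xi xj b - c |xi - b|)


/-- `F t = ∫_t^{3t} c - 2∫_0^t c`, the maximal regional payoff function. -/
noncomputable def F (c : ℝ → ℝ) (t : ℝ) : ℝ :=
  (∫ b in t..(3*t), c b) - 2 * ∫ b in (0:ℝ)..t, c b

theorem left_region_max_payoff (c : ℝ → ℝ)
    (hc : ContinuousOn c (Icc 0 1)) (hmono : StrictMonoOn c (Icc 0 1))
    (xj : ℝ) (hxj : xj ∈ Icc (0:ℝ) 1) :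
    U c (xj / 3) xj
      = (∫ b in (xj / 3)..xj, c b) - 2 * ∫ b in (0:ℝ)..(xj / 3), c b ∧
    U c (xj / 3) xj = F c (xj / 3) := by
  obtain ⟨hxj0, hxj1⟩ := hxj
  have ht0 : 0 ≤ xj / 3 := by linarith
  set t := xj / 3 with htdef
  have h3t : 3 * t = xj := by rw [htdef]; ring
  have ht1 : t ≤ 1 := by rw [htdef]; linarith
  have ht13 : 3 * t ≤ 1 := by rw [h3t]; exact hxj1
  have hmono' : MonotoneOn c (Icc 0 1) := hmono.monotoneOn
  -- continuity of the building blocks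
  have habs : ∀ a : ℝ, a ∈ Icc (0:ℝ) 1 → ContinuousOn (fun b => c |a - b|) (Icc 0 1) := by
    rintro a ⟨ha0, ha1⟩
    refine hc.comp (by fun_prop) ?_
    rintro b ⟨hb0, hb1⟩
    exact ⟨abs_nonneg _, abs_le.mpr ⟨by linarith, by linarith⟩⟩
  have htmem : t ∈ Icc (0:ℝ) 1 := ⟨ht0, ht1⟩
  have h3tmem : (3*t) ∈ Icc (0:ℝ) 1 := ⟨by linarith, ht13⟩
  have hc1 : ContinuousOn (fun b => c |t - b|) (Icc 0 1) := habs t htmem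
  have hc2 : ContinuousOn (fun b => c |3*t - b|) (Icc 0 1) := habs _ h3tmem
  have hg : ContinuousOn (fun b => w c t (3*t) b - c |t - b|) (Icc 0 1) := by
    exact fun x hx => ((hc1 x hx).max (hc2 x hx)).sub (hc1 x hx)
  -- interval integrability helper
  have hint : ∀ (f : ℝ → ℝ), ContinuousOn f (Icc 0 1) → ∀ a b : ℝ,
      a ∈ Icc (0:ℝ) 1 → b ∈ Icc (0:ℝ) 1 → IntervalIntegrable f volume a b := by
    intro f hf a b ha hb
    exact (hf.mono (uIcc_subset_Icc ha hb)).intervalIntegrable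
  -- split the integral at t and 2t
  have h2tmem : (2*t) ∈ Icc (0:ℝ) 1 := ⟨by linarith, by linarith⟩
  have h0mem : (0:ℝ) ∈ Icc (0:ℝ) 1 := ⟨le_refl _, zero_le_one⟩
  have h1mem : (1:ℝ) ∈ Icc (0:ℝ) 1 := ⟨zero_le_one, le_refl _⟩
  set g : ℝ → ℝ := fun b => w c t (3*t) b - c |t - b| with hgdef
  have hsplit1 : (∫ b in (0:ℝ)..(2*t), g b) + (∫ b in (2*t)..1, g b)
      = ∫ b in (0:ℝ)..1, g b :=
    intervalIntegral.integral_add_adjacent_intervals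
      (hint g hg 0 (2*t) h0mem h2tmem) (hint g hg (2*t) 1 h2tmem h1mem)
  have hsplit2 : (∫ b in (0:ℝ)..t, g b) + (∫ b in t..(2*t), g b)
      = ∫ b in (0:ℝ)..(2*t), g b :=
    intervalIntegral.integral_add_adjacent_intervals
      (hint g hg 0 t h0mem htmem) (hint g hg t (2*t) htmem h2tmem)
  -- Piece 1 : [0, t]
  have hP1 : (∫ b in (0:ℝ)..t, g b)
      = (∫ b in (2*t)..(3*t), c b) - ∫ b in (0:ℝ)..t, c b := by
    have heq : EqOn g (fun b => c (3*t - b) - c (t - b)) (uIcc 0 t) := by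
      intro b hb
      rw [uIcc_of_le ht0] at hb
      obtain ⟨hb0, hbt⟩ := hb
      have h1 : |t - b| = t - b := abs_of_nonneg (by linarith)
      have h2 : |3*t - b| = 3*t - b := abs_of_nonneg (by linarith)
      have hmem1 : t - b ∈ Icc (0:ℝ) 1 := ⟨by linarith, by linarith⟩
      have hmem2 : 3*t - b ∈ Icc (0:ℝ) 1 := ⟨by linarith, by linarith⟩
      simp only [hgdef, w, h1, h2]
      rw [max_eq_right (hmono' hmem1 hmem2 (by linarith))]
    rw [intervalIntegral.integral_congr heq]
    have hcA : ContinuousOn (fun b => c (3*t - b)) (Icc 0 t) := by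
      refine hc.comp (by fun_prop) ?_
      rintro b ⟨hb0, hb1⟩; exact ⟨by linarith, by linarith⟩
    have hcB : ContinuousOn (fun b => c (t - b)) (Icc 0 t) := by
      refine hc.comp (by fun_prop) ?_
      rintro b ⟨hb0, hb1⟩; exact ⟨by linarith, by linarith⟩
    rw [intervalIntegral.integral_sub
      ((hcA.mono (by rw [uIcc_of_le ht0])).intervalIntegrable)
      ((hcB.mono (by rw [uIcc_of_le ht0])).intervalIntegrable)]
    have e1 : (∫ b in (0:ℝ)..t, c (3*t - b)) = ∫ b in (2*t)..(3*t), c b := by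
      rw [intervalIntegral.integral_comp_sub_left c (3*t)]
      norm_num
      ring_nf
    have e2 : (∫ b in (0:ℝ)..t, c (t - b)) = ∫ b in (0:ℝ)..t, c b := by
      rw [intervalIntegral.integral_comp_sub_left c t]
      norm_num
    rw [e1, e2]
  -- Piece 2 : [t, 2t]
  have hP2 : (∫ b in t..(2*t), g b)
      = (∫ b in t..(2*t), c b) - ∫ b in (0:ℝ)..t, c b := by
    have heq : EqOn g (fun b => c (3*t - b) - c (b - t)) (uIcc t (2*t)) := by
      intro b hb
      rw [uIcc_of_le (by linarith)] at hb
      obtain ⟨hbt, hb2t⟩ := hb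
      have h1 : |t - b| = b - t := by
        rw [abs_sub_comm]; exact abs_of_nonneg (by linarith)
      have h2 : |3*t - b| = 3*t - b := abs_of_nonneg (by linarith)
      have hmem1 : b - t ∈ Icc (0:ℝ) 1 := ⟨by linarith, by linarith⟩
      have hmem2 : 3*t - b ∈ Icc (0:ℝ) 1 := ⟨by linarith, by linarith⟩
      simp only [hgdef, w, h1, h2]
      rw [max_eq_right (hmono' hmem1 hmem2 (by linarith))]
    rw [intervalIntegral.integral_congr heq]
    have hcA : ContinuousOn (fun b => c (3*t - b)) (Icc t (2*t)) := by
      refine hc.comp (by fun_prop) ?_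
      rintro b ⟨hb0, hb1⟩; exact ⟨by linarith, by linarith⟩
    have hcB : ContinuousOn (fun b => c (b - t)) (Icc t (2*t)) := by
      refine hc.comp (by fun_prop) ?_
      rintro b ⟨hb0, hb1⟩
      show b - t ∈ Icc (0:ℝ) 1
      exact ⟨by linarith, by linarith⟩
    rw [intervalIntegral.integral_sub
      ((hcA.mono (by rw [uIcc_of_le (by linarith : t ≤ 2*t)])).intervalIntegrable)
      ((hcB.mono (by rw [uIcc_of_le (by linarith : t ≤ 2*t)])).intervalIntegrable)]
    have e1 : (∫ b in t..(2*t), c (3*t - b)) = ∫ b in t..(2*t), c b := by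
      rw [intervalIntegral.integral_comp_sub_left c (3*t)]
      ring_nf
    have e2 : (∫ b in t..(2*t), c (b - t)) = ∫ b in (0:ℝ)..t, c b := by
      rw [intervalIntegral.integral_comp_sub_right c t]
      ring_nf
    rw [e1, e2]
  -- Piece 3 : [2t, 1]
  have hP3 : (∫ b in (2*t)..1, g b) = 0 := by
    have heq : EqOn g (fun _ => (0:ℝ)) (uIcc (2*t) 1) := by
      intro b hb
      rw [uIcc_of_le h2tmem.2] at hb
      obtain ⟨hb2t, hb1⟩ := hb
      have h1 : |t - b| = b - t := by
        rw [abs_sub_comm]; exact abs_of_nonneg (by linarith)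
      have hmem1 : |3*t - b| ∈ Icc (0:ℝ) 1 := by
        constructor
        · exact abs_nonneg _
        · rw [abs_sub_comm]; exact abs_le.mpr ⟨by linarith, by linarith⟩ |>.trans_eq rfl
      have hmem2 : b - t ∈ Icc (0:ℝ) 1 := ⟨by linarith, by linarith⟩
      have hle : |3*t - b| ≤ b - t := by
        rw [abs_sub_comm]; exact abs_le.mpr ⟨by linarith, by linarith⟩
      simp only [hgdef, w, h1]
      rw [max_eq_left (hmono' hmem1 hmem2 hle)]
      ring
    rw [intervalIntegral.integral_congr heq]
    simp
  -- assemble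
  have hjoin : (∫ b in t..(2*t), c b) + (∫ b in (2*t)..(3*t), c b)
      = ∫ b in t..(3*t), c b :=
    intervalIntegral.integral_add_adjacent_intervals
      (hint c hc t (2*t) htmem h2tmem) (hint c hc (2*t) (3*t) h2tmem h3tmem)
  have key : (∫ b in (0:ℝ)..1, g b)
      = (∫ b in t..(3*t), c b) - 2 * ∫ b in (0:ℝ)..t, c b := by
    rw [← hsplit1, ← hsplit2, hP1, hP2, hP3, ← hjoin]; ring
  have hU : U c t xj = (∫ b in t..(3*t), c b) - 2 * ∫ b in (0:ℝ)..t, c b := by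
    rw [U, ← h3t]; exact key
  constructor
  · rw [hU, h3t]
  · rw [hU, F]
end

section
/- For every x_j ∈ [0,1]: U_i(x_j/3, x_j) ≥ U_i((2 + x_j)/3, x_j) if and only if x_j ≥ 1/2, with equality of the two payoffs exactly when x_j = 1/2. -/
/-!
Put `F t = ∫₀ᵗ (c u - c (u/3)) du`. Against an opponent at `x`, the platform `x/3` is the
cheaper one exactly for benefactors left of the midpoint `2x/3`, and integrating the gain there
gives `U (x/3) x = F x`. The reflection `b ↦ 1 - b` carries the pair `((2+x)/3, x)` to
`((1-x)/3, 1-x)`, so `U ((2+x)/3) x = F (1 - x)`. As `c (u/3) < c u` for `u > 0`, `F` is strictly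
increasing on `[0,1]`, and the comparison becomes one between `x` and `1 - x`.
-/

open MeasureTheory Set

open intervalIntegral

lemma ContinuousOn.exists_continuous_eqOn_Icc {α β : Type*} [LinearOrder α] [TopologicalSpace α]
    [OrderTopology α] [TopologicalSpace β] {f : α → β} {a b : α} (hab : a ≤ b)
    (hf : ContinuousOn f (Icc a b)) : ∃ g : α → β, Continuous g ∧ EqOn f g (Icc a b) :=
  ⟨f ∘ Subtype.val ∘ projIcc a b hab,
    hf.comp_continuous (continuous_subtype_val.comp continuous_projIcc)
      fun t => (projIcc a b hab t).2,
    fun t ht => by simp [projIcc_of_mem hab ht]⟩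

lemma abs_sub_mem_Icc_zero_one {x b : ℝ} (hx : x ∈ Icc (0:ℝ) 1) (hb : b ∈ Icc (0:ℝ) 1) :
    |x - b| ∈ Icc (0:ℝ) 1 :=
  ⟨abs_nonneg _, abs_sub_le_of_nonneg_of_le hx.1 hx.2 hb.1 hb.2⟩

lemma U_congr {c c' : ℝ → ℝ} (h : EqOn c c' (Icc 0 1)) {xi xj : ℝ} (hi : xi ∈ Icc (0:ℝ) 1)
    (hj : xj ∈ Icc (0:ℝ) 1) : U c xi xj = U c' xi xj := by
  refine integral_congr fun b hb => ?_
  rw [uIcc_of_le zero_le_one] at hb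
  simp only [w, h (abs_sub_mem_Icc_zero_one hi hb), h (abs_sub_mem_Icc_zero_one hj hb)]

lemma U_one_sub (c : ℝ → ℝ) (xi xj : ℝ) : U c (1 - xi) (1 - xj) = U c xi xj := by
  have := integral_comp_sub_left (a := 0) (b := 1)
    (fun b => w c (1 - xi) (1 - xj) b - c |1 - xi - b|) (1:ℝ)
  simp only [w, sub_sub_sub_cancel_left, sub_self, sub_zero] at this
  simp only [U, w, ← this, abs_sub_comm xi, abs_sub_comm xj]

lemma integral_comp_abs_sub {f : ℝ → ℝ} (hf : Continuous f) {a : ℝ} (ha : 0 ≤ a) :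
    ∫ b in 0..2 * a, f |a - b| = 2 * ∫ u in 0..a, f u := by
  have hint : ∀ s t, IntervalIntegrable (fun b => f |a - b|) volume s t := fun s t =>
    (by fun_prop : Continuous fun b => f |a - b|).intervalIntegrable s t
  have left : ∫ b in 0..a, f |a - b| = ∫ u in 0..a, f u := by
    rw [integral_congr (g := fun b => f (a - b)), integral_comp_sub_left]
    · simp
    · intro b hb
      rw [uIcc_of_le ha] at hb
      simp only [abs_of_nonneg (sub_nonneg.2 hb.2)]
  have right : ∫ b in a..2 * a, f |a - b| = ∫ u in 0..a, f u := by
    rw [integral_congr (g := fun b => f (b - a)), integral_comp_sub_right]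
    · ring_nf
    · intro b hb
      rw [uIcc_of_le (by linarith)] at hb
      simp only [abs_of_nonpos (sub_nonpos.2 hb.1), neg_sub]
  rw [← integral_add_adjacent_intervals (hint 0 a) (hint a (2 * a)), left, right, two_mul]

section
variable {c : ℝ → ℝ} (hc : Continuous c)
include hc

lemma U_div_three_eq_integral_up_to_two_thirds (hmono : MonotoneOn c (Icc 0 1)) {x : ℝ}
    (hx : x ∈ Icc (0:ℝ) 1) :
    U c (x / 3) x = ∫ b in 0..2 * (x / 3), (c (x - b) - c |x / 3 - b|) := by
  have hx3 : x / 3 ∈ Icc (0:ℝ) 1 := ⟨by linarith [hx.1], by linarith [hx.2]⟩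
  have near : EqOn (fun b => w c (x / 3) x b - c |x / 3 - b|) (fun b => c (x - b) - c |x / 3 - b|)
      (uIcc 0 (2 * (x / 3))) := by
    intro b hb
    rw [uIcc_of_le (by linarith [hx.1])] at hb
    have hb' : b ∈ Icc (0:ℝ) 1 := ⟨hb.1, by linarith [hb.2, hx.2]⟩
    have hxb : |x - b| = x - b := abs_of_nonneg (by linarith [hb.2, hx.1])
    have hle : c |x / 3 - b| ≤ c |x - b| := hmono (abs_sub_mem_Icc_zero_one hx3 hb')
      (abs_sub_mem_Icc_zero_one hx hb')
      (by rw [hxb]; exact abs_le.2 ⟨by linarith [hb.2], by linarith [hx.1]⟩)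
    rw [hxb] at hle
    simp only [w, hxb, max_eq_right hle]
  have far : EqOn (fun b => w c (x / 3) x b - c |x / 3 - b|) (fun _ => 0)
      (uIcc (2 * (x / 3)) 1) := by
    intro b hb
    rw [uIcc_of_le (by linarith [hx.2])] at hb
    have hb' : b ∈ Icc (0:ℝ) 1 := ⟨by linarith [hb.1, hx.1], hb.2⟩
    have hxb : |x / 3 - b| = b - x / 3 := by
      rw [abs_sub_comm, abs_of_nonneg (by linarith [hb.1, hx.1])]
    have hle : c |x - b| ≤ c |x / 3 - b| := hmono (abs_sub_mem_Icc_zero_one hx hb')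
      (abs_sub_mem_Icc_zero_one hx3 hb')
      (by rw [hxb]; exact abs_le.2 ⟨by linarith [hx.1], by linarith [hb.1]⟩)
    simp only [w, max_eq_left hle, sub_self]
  have hint : ∀ s t, IntervalIntegrable (fun b => w c (x / 3) x b - c |x / 3 - b|) volume s t :=
    fun s t => (by unfold w; fun_prop : Continuous _).intervalIntegrable s t
  rw [U, ← integral_add_adjacent_intervals (hint 0 (2 * (x / 3))) (hint _ 1),
    integral_congr near, integral_congr far, intervalIntegral.integral_zero, add_zero]

lemma U_div_three_eq_integral (hmono : MonotoneOn c (Icc 0 1)) {x : ℝ} (hx : x ∈ Icc (0:ℝ) 1) :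
    U c (x / 3) x = ∫ u in 0..x, (c u - c (u / 3)) :=
  calc U c (x / 3) x = ∫ b in 0..2 * (x / 3), (c (x - b) - c |x / 3 - b|) :=
        U_div_three_eq_integral_up_to_two_thirds hc hmono hx
    _ = (∫ u in x / 3..x, c u) - 2 * ∫ u in 0..x / 3, c u := by
        rw [integral_sub ((by fun_prop : Continuous fun b => c (x - b)).intervalIntegrable _ _)
          ((by fun_prop : Continuous fun b => c |x / 3 - b|).intervalIntegrable _ _),
          integral_comp_sub_left, integral_comp_abs_sub hc (by linarith [hx.1])]
        ring_nf
    _ = ∫ u in 0..x, (c u - c (u / 3)) := by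
        rw [integral_sub (hc.intervalIntegrable _ _)
          ((by fun_prop : Continuous fun u => c (u / 3)).intervalIntegrable _ _),
          integral_comp_div _ three_ne_zero, ← integral_add_adjacent_intervals
            (hc.intervalIntegrable 0 (x / 3)) (hc.intervalIntegrable _ x)]
        ring_nf

lemma strictMonoOn_integral_sub_comp_div_three (hmono : StrictMonoOn c (Icc 0 1)) :
    StrictMonoOn (fun t => ∫ u in 0..t, (c u - c (u / 3))) (Icc 0 1) := by
  intro s hs t ht hst
  have hint : ∀ a b, IntervalIntegrable (fun u => c u - c (u / 3)) volume a b := fun a b =>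
    (by fun_prop : Continuous fun u => c u - c (u / 3)).intervalIntegrable a b
  have hpos : 0 < ∫ u in s..t, (c u - c (u / 3)) := by
    refine intervalIntegral_pos_of_pos_on (hint s t) (fun u hu => ?_) hst
    have hu0 : 0 < u := hs.1.trans_lt hu.1
    exact sub_pos.2 (hmono ⟨by positivity, by linarith [hu.2, ht.2]⟩
      ⟨hu0.le, by linarith [hu.2, ht.2]⟩ (by linarith))
  simpa [← integral_add_adjacent_intervals (hint 0 s) (hint s t)] using hpos

end

theorem region_comparison (c : ℝ → ℝ)
    (hc : ContinuousOn c (Icc 0 1)) (hmono : StrictMonoOn c (Icc 0 1))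
    (xj : ℝ) (hxj : xj ∈ Icc (0:ℝ) 1) :
    (U c ((2 + xj) / 3) xj ≤ U c (xj / 3) xj ↔ 1/2 ≤ xj) ∧
    (U c (xj / 3) xj = U c ((2 + xj) / 3) xj ↔ xj = 1/2) := by
  obtain ⟨c', hc', hcc'⟩ := hc.exists_continuous_eqOn_Icc zero_le_one
  have hmono' := hmono.congr hcc'
  have hxj' : 1 - xj ∈ Icc (0:ℝ) 1 := ⟨by linarith [hxj.2], by linarith [hxj.1]⟩
  have hinner : U c (xj / 3) xj = ∫ u in 0..xj, (c' u - c' (u / 3)) := by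
    rw [U_congr hcc' ⟨by linarith [hxj.1], by linarith [hxj.2]⟩ hxj,
      U_div_three_eq_integral hc' hmono'.monotoneOn hxj]
  have houter : U c ((2 + xj) / 3) xj = ∫ u in 0..1 - xj, (c' u - c' (u / 3)) := by
    rw [U_congr hcc' ⟨by linarith [hxj.1], by linarith [hxj.2]⟩ hxj, ← U_one_sub,
      show 1 - (2 + xj) / 3 = (1 - xj) / 3 by ring,
      U_div_three_eq_integral hc' hmono'.monotoneOn hxj']
  have hF := strictMonoOn_integral_sub_comp_div_three hc' hmono'
  rw [hinner, houter, hF.le_iff_le hxj' hxj, hF.injOn.eq_iff hxj hxj']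
  constructor <;> constructor <;> intro h <;> linarith
end

section
/- Best-response characterization: fix x_j ∈ [0,1] and let BR(x_j) denote the set of maximizers of x ↦ U_i(x, x_j) over [0,1]. If x_j > 1/2 then BR(x_j) = {x_j/3}; if x_j < 1/2 then BR(x_j) = {(2 + x_j)/3}; and if x_j = 1/2 then BR(x_j) = {1/6, 5/6}. -/
open MeasureTheory Set

open intervalIntegral

section Aux
variable {c : ℝ → ℝ}

lemma contOn_abs (hc : ContinuousOn c (Icc 0 1)) {x : ℝ} (hx : x ∈ Icc (0:ℝ) 1)
    {s : Set ℝ} (hs : s ⊆ Icc 0 1) : ContinuousOn (fun t => c |x - t|) s := by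
  apply hc.comp (Continuous.continuousOn (by continuity))
  intro t ht
  have h1 := hs ht
  simp only [mem_Icc] at h1 hx ⊢
  refine ⟨abs_nonneg _, ?_⟩
  rw [abs_sub_le_iff]
  constructor <;> linarith

lemma ii_abs (hc : ContinuousOn c (Icc 0 1)) {x a b : ℝ} (hx : x ∈ Icc (0:ℝ) 1)
    (ha : a ∈ Icc (0:ℝ) 1) (hb : b ∈ Icc (0:ℝ) 1) :
    IntervalIntegrable (fun t => c |x - t|) volume a b :=
  (contOn_abs hc hx (uIcc_subset_Icc ha hb)).intervalIntegrable

lemma ii_c (hc : ContinuousOn c (Icc 0 1)) {a b : ℝ}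
    (ha : a ∈ Icc (0:ℝ) 1) (hb : b ∈ Icc (0:ℝ) 1) :
    IntervalIntegrable c volume a b :=
  (hc.mono (uIcc_subset_Icc ha hb)).intervalIntegrable

lemma U_formula_left (hc : ContinuousOn c (Icc 0 1)) (hmono : StrictMonoOn c (Icc 0 1))
    {x xj : ℝ} (hx0 : 0 ≤ x) (hxx : x < xj) (hj1 : xj ≤ 1) :
    U c x xj = (∫ u in (0:ℝ)..xj, c u) - (∫ u in (0:ℝ)..x, c u)
      - 2 * ∫ u in (0:ℝ)..((xj - x)/2), c u := by
  have hx1 : x ≤ 1 := le_trans hxx.le hj1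
  have hj0 : 0 ≤ xj := le_trans hx0 hxx.le
  have hxI : x ∈ Icc (0:ℝ) 1 := ⟨hx0, hx1⟩
  have hjI : xj ∈ Icc (0:ℝ) 1 := ⟨hj0, hj1⟩
  set m : ℝ := (x + xj)/2 with hm
  have hmI : m ∈ Icc (0:ℝ) 1 := ⟨by simp only [hm]; linarith, by simp only [hm]; linarith⟩
  have h0I : (0:ℝ) ∈ Icc (0:ℝ) 1 := ⟨le_refl _, by norm_num⟩
  have h1I : (1:ℝ) ∈ Icc (0:ℝ) 1 := ⟨by norm_num, le_refl _⟩
  have hxm : x < m := by simp only [hm]; linarith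
  have hmj : m < xj := by simp only [hm]; linarith
  -- continuity of the big integrand on subsets of [0,1]
  have Wcont : ∀ {s : Set ℝ}, s ⊆ Icc 0 1 →
      ContinuousOn (fun b => w c x xj b - c |x - b|) s := by
    intro s hs
    exact ((contOn_abs hc hxI hs).sup (contOn_abs hc hjI hs)).sub (contOn_abs hc hxI hs)
  have ii1 : IntervalIntegrable (fun b => w c x xj b - c |x - b|) volume 0 m :=
    (Wcont (uIcc_subset_Icc h0I hmI)).intervalIntegrable
  have ii2 : IntervalIntegrable (fun b => w c x xj b - c |x - b|) volume m 1 :=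
    (Wcont (uIcc_subset_Icc hmI h1I)).intervalIntegrable
  have split : U c x xj = (∫ b in (0:ℝ)..m, (w c x xj b - c |x - b|))
      + ∫ b in m..(1:ℝ), (w c x xj b - c |x - b|) := by
    rw [U, integral_add_adjacent_intervals ii1 ii2]
  have hzero : (∫ b in m..(1:ℝ), (w c x xj b - c |x - b|)) = 0 := by
    rw [integral_congr (g := fun _ => (0:ℝ))]
    · simp
    · intro b hb
      dsimp only
      rw [uIcc_of_le hmI.2] at hb
      have hb1 : m ≤ b := hb.1
      have hb2 : b ≤ 1 := hb.2
      have habs1 : |x - b| = b - x := by rw [abs_sub_comm, abs_of_nonneg]; linarith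
      have habs2 : |xj - b| ≤ b - x := by rw [abs_sub_le_iff]; constructor <;> [skip; skip] <;> simp only [hm] at hb1 <;> linarith
      have hmem1 : |xj - b| ∈ Icc (0:ℝ) 1 := ⟨abs_nonneg _, by rw [abs_sub_le_iff]; constructor <;> linarith⟩
      have hmem2 : |x - b| ∈ Icc (0:ℝ) 1 := ⟨abs_nonneg _, by rw [abs_sub_le_iff]; constructor <;> linarith⟩
      have : c |xj - b| ≤ c |x - b| := by
        apply hmono.monotoneOn hmem1 hmem2
        rw [habs1]; exact habs2
      show w c x xj b - c |x - b| = 0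
      simp only [w, max_eq_left this, sub_self]
  have hcongr : (∫ b in (0:ℝ)..m, (w c x xj b - c |x - b|))
      = ∫ b in (0:ℝ)..m, (c (xj - b) - c |x - b|) := by
    apply integral_congr
    intro b hb
    dsimp only
    rw [uIcc_of_le hmI.1] at hb
    have hb1 : 0 ≤ b := hb.1
    have hb2 : b ≤ m := hb.2
    have habs : |xj - b| = xj - b := abs_of_nonneg (by linarith)
    have habs2 : |x - b| ≤ xj - b := by
      rw [abs_sub_le_iff]; constructor <;> simp only [hm] at hb2 <;> linarith
    have hmem1 : |x - b| ∈ Icc (0:ℝ) 1 := ⟨abs_nonneg _, by rw [abs_sub_le_iff]; constructor <;> linarith⟩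
    have hmem2 : (xj - b) ∈ Icc (0:ℝ) 1 := ⟨by linarith, by linarith⟩
    have hle : c |x - b| ≤ c (xj - b) := hmono.monotoneOn hmem1 hmem2 habs2
    simp only [w, habs, max_eq_right hle]
  have iiA : IntervalIntegrable (fun b => c (xj - b)) volume 0 m := by
    apply ContinuousOn.intervalIntegrable
    apply hc.comp (Continuous.continuousOn (by continuity))
    intro t ht
    rw [uIcc_of_le hmI.1, mem_Icc] at ht
    exact ⟨by linarith [ht.2], by linarith [ht.1]⟩
  have iiB : IntervalIntegrable (fun b => c |x - b|) volume 0 m := ii_abs hc hxI h0I hmI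
  have hsub : (∫ b in (0:ℝ)..m, (c (xj - b) - c |x - b|))
      = (∫ b in (0:ℝ)..m, c (xj - b)) - ∫ b in (0:ℝ)..m, c |x - b| :=
    integral_sub iiA iiB
  have hA : (∫ b in (0:ℝ)..m, c (xj - b))
      = (∫ u in (0:ℝ)..xj, c u) - ∫ u in (0:ℝ)..((xj - x)/2), c u := by
    rw [integral_comp_sub_left c xj]
    have e1 : xj - m = (xj - x)/2 := by simp only [hm]; ring
    have e2 : xj - 0 = xj := by ring
    rw [e1, e2]
    rw [integral_interval_sub_left (ii_c hc h0I hjI)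
      (ii_c hc h0I ⟨by linarith, by linarith⟩)]
  have hB : (∫ b in (0:ℝ)..m, c |x - b|)
      = (∫ u in (0:ℝ)..x, c u) + ∫ u in (0:ℝ)..((xj - x)/2), c u := by
    have s1 : (∫ b in (0:ℝ)..m, c |x - b|)
        = (∫ b in (0:ℝ)..x, c |x - b|) + ∫ b in x..m, c |x - b| :=
      (integral_add_adjacent_intervals (ii_abs hc hxI h0I hxI) (ii_abs hc hxI hxI hmI)).symm
    have s2 : (∫ b in (0:ℝ)..x, c |x - b|) = ∫ b in (0:ℝ)..x, c (x - b) := by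
      apply integral_congr
      intro b hb
      dsimp only
      rw [uIcc_of_le hx0, mem_Icc] at hb
      rw [abs_of_nonneg (by linarith [hb.2])]
    have s3 : (∫ b in (0:ℝ)..x, c (x - b)) = ∫ u in (0:ℝ)..x, c u := by
      rw [integral_comp_sub_left c x]
      norm_num
    have s4 : (∫ b in x..m, c |x - b|) = ∫ b in x..m, c (b - x) := by
      apply integral_congr
      intro b hb
      dsimp only
      rw [uIcc_of_le hxm.le, mem_Icc] at hb
      rw [abs_sub_comm, abs_of_nonneg (by linarith [hb.1])]
    have s5 : (∫ b in x..m, c (b - x)) = ∫ u in (0:ℝ)..((xj - x)/2), c u := by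
      rw [integral_comp_sub_right c x]
      have e1 : x - x = (0:ℝ) := by ring
      have e2 : m - x = (xj - x)/2 := by simp only [hm]; ring
      rw [e1, e2]
    rw [s1, s2, s3, s4, s5]
  rw [split, hzero, hcongr, hsub, hA, hB]
  ring
end Aux


section Aux2
variable {c : ℝ → ℝ}

lemma U_self (c : ℝ → ℝ) (a : ℝ) : U c a a = 0 := by
  simp [U, w]

lemma U_reflect (c : ℝ → ℝ) (x xj : ℝ) : U c x xj = U c (1-x) (1-xj) := by
  rw [U, U]
  have h := integral_comp_sub_left
    (fun b => w c (1-x) (1-xj) b - c |1 - x - b|) 1 (a := (0:ℝ)) (b := (1:ℝ))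
  norm_num at h
  rw [← h]
  apply integral_congr
  intro b _
  dsimp only
  have e1 : (1 - x - (1 - b)) = -(x - b) := by ring
  have e2 : (1 - xj - (1 - b)) = -(xj - b) := by ring
  simp only [w, e1, e2, abs_neg]
  rw [abs_sub_comm b x]
end Aux2


section Aux3
variable {c : ℝ → ℝ}

lemma U_diff_left (hc : ContinuousOn c (Icc 0 1)) (hmono : StrictMonoOn c (Icc 0 1))
    {x xj : ℝ} (hx0 : 0 ≤ x) (hxx : x < xj) (hj1 : xj ≤ 1) :
    U c (xj/3) xj - U c x xj = ∫ v in x..(xj/3), (c ((xj - v)/2) - c v) := by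
  have hj0 : 0 < xj := lt_of_le_of_lt hx0 hxx
  have h1 := U_formula_left hc hmono (x := xj/3) (by positivity) (by linarith) hj1
  have h2 := U_formula_left hc hmono hx0 hxx hj1
  have e0 : (xj - xj/3)/2 = xj/3 := by ring
  rw [e0] at h1
  have hxI : x ∈ Icc (0:ℝ) 1 := ⟨hx0, by linarith⟩
  have hsI : xj/3 ∈ Icc (0:ℝ) 1 := ⟨by positivity, by linarith⟩
  have htI : (xj - x)/2 ∈ Icc (0:ℝ) 1 := ⟨by linarith, by linarith⟩
  have h0I : (0:ℝ) ∈ Icc (0:ℝ) 1 := ⟨le_refl _, by norm_num⟩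
  have iic1 : IntervalIntegrable (fun v => c ((xj - v)/2)) volume x (xj/3) := by
    apply ContinuousOn.intervalIntegrable
    apply hc.comp (Continuous.continuousOn (by continuity))
    intro t ht
    have h := uIcc_subset_Icc (a₂ := (0:ℝ)) (b₂ := xj) ⟨hx0, hxx.le⟩
      ⟨by positivity, by linarith⟩ ht
    simp only [mem_Icc] at h ⊢
    constructor <;> [linarith [h.2]; linarith [h.1]]
  have iic2 : IntervalIntegrable c volume x (xj/3) := ii_c hc hxI hsI
  rw [integral_sub iic1 iic2]
  have hfirst : (∫ v in x..(xj/3), c ((xj - v)/2))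
      = 2 * ((∫ u in (0:ℝ)..((xj-x)/2), c u) - ∫ u in (0:ℝ)..(xj/3), c u) := by
    have h3 : (∫ v in x..(xj/3), c ((xj - v)/2))
        = ∫ v in x..(xj/3), (fun u => c (u/2)) (xj - v) := rfl
    rw [h3, integral_comp_sub_left (fun u => c (u/2)) xj]
    rw [integral_comp_div (c := 2) (f := c) (by norm_num)]
    rw [e0]
    rw [smul_eq_mul, integral_interval_sub_left (ii_c hc h0I htI) (ii_c hc h0I hsI)]
  have hsecond : (∫ v in x..(xj/3), c v)
      = (∫ u in (0:ℝ)..(xj/3), c u) - ∫ u in (0:ℝ)..x, c u := by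
    rw [integral_interval_sub_left (ii_c hc h0I hsI) (ii_c hc h0I hxI)]
  rw [hfirst, hsecond, h1, h2]
  ring
end Aux3


section Aux4
variable {c : ℝ → ℝ}

lemma ii_half (hc : ContinuousOn c (Icc 0 1)) {a b xj : ℝ} (hj0 : 0 ≤ xj) (hj1 : xj ≤ 1)
    (ha : a ∈ Icc (0:ℝ) xj) (hb : b ∈ Icc (0:ℝ) xj) :
    IntervalIntegrable (fun v => c ((xj - v)/2)) volume a b := by
  apply ContinuousOn.intervalIntegrable
  apply hc.comp (Continuous.continuousOn (by continuity))
  intro t ht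
  have h := uIcc_subset_Icc ha hb ht
  simp only [mem_Icc] at h ⊢
  constructor <;> [linarith [h.2]; linarith [h.1]]

lemma left_strict (hc : ContinuousOn c (Icc 0 1)) (hmono : StrictMonoOn c (Icc 0 1))
    {x xj : ℝ} (hx0 : 0 ≤ x) (hxx : x < xj) (hj1 : xj ≤ 1) (hne : x ≠ xj/3) :
    U c x xj < U c (xj/3) xj := by
  have hj0 : 0 < xj := lt_of_le_of_lt hx0 hxx
  rw [← sub_pos, U_diff_left hc hmono hx0 hxx hj1]
  have hxI : x ∈ Icc (0:ℝ) xj := ⟨hx0, hxx.le⟩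
  have hsI : xj/3 ∈ Icc (0:ℝ) xj := ⟨by positivity, by linarith⟩
  have memc : ∀ v : ℝ, 0 ≤ v → v < xj → (v ∈ Icc (0:ℝ) 1 ∧ (xj - v)/2 ∈ Icc (0:ℝ) 1) := by
    intro v h1 h2
    exact ⟨⟨h1, by linarith⟩, ⟨by linarith, by linarith⟩⟩
  rcases lt_or_gt_of_ne hne with hlt | hgt
  · apply intervalIntegral_pos_of_pos_on
    · exact (ii_half hc hj0.le hj1 hxI hsI).sub (ii_c hc ⟨hx0, by linarith⟩ ⟨by positivity, by linarith⟩)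
    · intro v hv
      obtain ⟨hv1, hv2⟩ := hv
      obtain ⟨m1, m2⟩ := memc v (by linarith) (by linarith)
      have harg : v < (xj - v)/2 := by linarith
      have := hmono m1 m2 harg
      linarith
    · exact hlt
  · have key : 0 < ∫ v in (xj/3)..x, (c v - c ((xj - v)/2)) := by
      apply intervalIntegral_pos_of_pos_on
      · exact (ii_c hc ⟨by positivity, by linarith⟩ ⟨hx0, by linarith⟩).sub
          (ii_half hc hj0.le hj1 hsI hxI)
      · intro v hv
        obtain ⟨hv1, hv2⟩ := hv
        have harg : (xj - v)/2 < v := by linarith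
        obtain ⟨m1, m2⟩ := memc v (by linarith) (by linarith)
        have := hmono m2 m1 harg
        linarith
      · exact hgt
    have e : (∫ v in x..(xj/3), (c ((xj - v)/2) - c v))
        = ∫ v in (xj/3)..x, (c v - c ((xj - v)/2)) := by
      rw [integral_symm, ← intervalIntegral.integral_neg]
      congr 1
      funext v
      ring
    rw [e]; exact key

/-- value of the left-branch optimum -/
noncomputable def G (c : ℝ → ℝ) (s : ℝ) : ℝ :=
  (∫ u in (0:ℝ)..s, c u) - 3 * ∫ u in (0:ℝ)..(s/3), c u

lemma G_val (hc : ContinuousOn c (Icc 0 1)) (hmono : StrictMonoOn c (Icc 0 1))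
    {s : ℝ} (h0 : 0 < s) (h1 : s ≤ 1) : U c (s/3) s = G c s := by
  rw [U_formula_left hc hmono (by positivity) (by linarith) h1, G]
  rw [show (s - s/3)/2 = s/3 by ring]
  ring

lemma G_strict (hc : ContinuousOn c (Icc 0 1)) (hmono : StrictMonoOn c (Icc 0 1))
    {a b : ℝ} (ha : 0 ≤ a) (hab : a < b) (hb1 : b ≤ 1) : G c a < G c b := by
  rw [← sub_pos]
  have h0I : (0:ℝ) ∈ Icc (0:ℝ) 1 := ⟨le_refl _, by norm_num⟩
  have haI : a ∈ Icc (0:ℝ) 1 := ⟨ha, by linarith⟩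
  have hbI : b ∈ Icc (0:ℝ) 1 := ⟨by linarith, hb1⟩
  have ha3 : a/3 ∈ Icc (0:ℝ) 1 := ⟨by linarith, by linarith⟩
  have hb3 : b/3 ∈ Icc (0:ℝ) 1 := ⟨by linarith, by linarith⟩
  have iidiv : IntervalIntegrable (fun v => c (v/3)) volume a b := by
    apply ContinuousOn.intervalIntegrable
    apply hc.comp (Continuous.continuousOn (by continuity))
    intro t ht
    have h := uIcc_subset_Icc haI hbI ht
    simp only [mem_Icc] at h ⊢
    constructor <;> [linarith [h.1]; linarith [h.2]]
  have key : G c b - G c a = ∫ v in a..b, (c v - c (v/3)) := by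
    rw [integral_sub (ii_c hc haI hbI) iidiv]
    have hdiv : (∫ v in a..b, c (v/3)) = 3 * ∫ u in (a/3)..(b/3), c u := by
      rw [integral_comp_div (c := 3) (f := c) (by norm_num), smul_eq_mul]
    rw [hdiv, G, G]
    rw [← integral_interval_sub_left (ii_c hc h0I hbI) (ii_c hc h0I haI),
        ← integral_interval_sub_left (ii_c hc h0I hb3) (ii_c hc h0I ha3)]
    ring
  rw [key]
  apply intervalIntegral_pos_of_pos_on
  · exact (ii_c hc haI hbI).sub iidiv
  · intro v hv
    obtain ⟨hv1, hv2⟩ := hv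
    have h0v : 0 < v := lt_of_le_of_lt ha hv1
    have := hmono (⟨by positivity, by linarith⟩ : v/3 ∈ Icc (0:ℝ) 1)
      (⟨h0v.le, by linarith⟩ : v ∈ Icc (0:ℝ) 1) (by linarith)
    linarith
  · exact hab
end Aux4


section Aux5
variable {c : ℝ → ℝ}

lemma G_zero (c : ℝ → ℝ) : G c 0 = 0 := by simp [G]

lemma main_half (hc : ContinuousOn c (Icc 0 1)) (hmono : StrictMonoOn c (Icc 0 1))
    {xj x : ℝ} (hjh : 1/2 ≤ xj) (hj1 : xj ≤ 1) (hx : x ∈ Icc (0:ℝ) 1)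
    (hne : x ≠ xj/3) (hne2 : ¬(xj = 1/2 ∧ x = 5/6)) :
    U c x xj < U c (xj/3) xj := by
  have hj0 : (0:ℝ) < xj := by linarith
  have hUopt : U c (xj/3) xj = G c xj := G_val hc hmono hj0 hj1
  rcases lt_trichotomy x xj with h | h | h
  · exact left_strict hc hmono hx.1 h hj1 hne
  · rw [h, U_self c xj, hUopt]
    have := G_strict hc hmono (le_refl 0) hj0 hj1
    rw [G_zero] at this
    exact this
  · have hj1' : xj < 1 := lt_of_lt_of_le h hx.2
    have hrefl : U c x xj = U c (1-x) (1-xj) := U_reflect c x xj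
    by_cases hcase : 1 - x = (1-xj)/3
    · have hxjhalf : 1/2 < xj := by
        rcases eq_or_lt_of_le hjh with he | hl
        · exact absurd ⟨he.symm, by rw [← he] at hcase; linarith⟩ hne2
        · exact hl
      calc U c x xj = U c (1-x) (1-xj) := hrefl
        _ = G c (1-xj) := by
            rw [hcase]; exact G_val hc hmono (by linarith) (by linarith)
        _ < G c xj := G_strict hc hmono (by linarith) (by linarith) hj1
        _ = U c (xj/3) xj := hUopt.symm
    · calc U c x xj = U c (1-x) (1-xj) := hrefl
        _ < U c ((1-xj)/3) (1-xj) :=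
            left_strict hc hmono (by linarith [hx.2]) (by linarith) (by linarith) hcase
        _ = G c (1-xj) := G_val hc hmono (by linarith) (by linarith)
        _ ≤ G c xj := by
            rcases eq_or_lt_of_le hjh with he | hl
            · rw [show (1:ℝ) - xj = xj by linarith]
            · exact (G_strict hc hmono (by linarith) (by linarith) hj1).le
        _ = U c (xj/3) xj := hUopt.symm

lemma main_low (hc : ContinuousOn c (Icc 0 1)) (hmono : StrictMonoOn c (Icc 0 1))
    {xj x : ℝ} (hj0 : 0 ≤ xj) (hjh : xj ≤ 1/2) (hx : x ∈ Icc (0:ℝ) 1)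
    (hne : x ≠ (2+xj)/3) (hne2 : ¬(xj = 1/2 ∧ x = 1/6)) :
    U c x xj < U c ((2+xj)/3) xj := by
  have h1 : U c x xj = U c (1-x) (1-xj) := U_reflect c x xj
  have h2 : U c ((2+xj)/3) xj = U c ((1-xj)/3) (1-xj) := by
    rw [U_reflect c ((2+xj)/3) xj, show 1 - (2+xj)/3 = (1-xj)/3 by ring]
  rw [h1, h2]
  have := main_half hc hmono (xj := 1-xj) (x := 1-x) (by linarith) (by linarith)
    ⟨by linarith [hx.2], by linarith [hx.1]⟩
    (by intro hcon; apply hne; linarith)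
    (by rintro ⟨ha, hb⟩; exact hne2 ⟨by linarith, by linarith⟩)
  exact this
end Aux5

theorem best_response_characterization (c : ℝ → ℝ)
    (hc : ContinuousOn c (Icc 0 1)) (hmono : StrictMonoOn c (Icc 0 1))
    (xj : ℝ) (hxj : xj ∈ Icc (0:ℝ) 1) :
    (1/2 < xj →
      {x ∈ Icc (0:ℝ) 1 | ∀ y ∈ Icc (0:ℝ) 1, U c y xj ≤ U c x xj} = {xj / 3}) ∧
    (xj < 1/2 →
      {x ∈ Icc (0:ℝ) 1 | ∀ y ∈ Icc (0:ℝ) 1, U c y xj ≤ U c x xj}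
        = {(2 + xj) / 3}) ∧
    (xj = 1/2 →
      {x ∈ Icc (0:ℝ) 1 | ∀ y ∈ Icc (0:ℝ) 1, U c y xj ≤ U c x xj}
        = {1/6, 5/6}) := by
  obtain ⟨hj0, hj1⟩ := hxj
  refine ⟨?_, ?_, ?_⟩
  · intro hhalf
    have hne2 : ∀ x : ℝ, ¬(xj = 1/2 ∧ x = 5/6) := by
      rintro x ⟨h, -⟩; rw [h] at hhalf; linarith
    ext x
    simp only [mem_setOf_eq, mem_singleton_iff]
    constructor
    · rintro ⟨hxI, hmax⟩
      by_contra hne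
      have h1 := main_half hc hmono hhalf.le hj1 hxI hne (hne2 x)
      have h2 := hmax (xj/3) ⟨by linarith, by linarith⟩
      linarith
    · intro hx
      subst hx
      refine ⟨⟨by linarith, by linarith⟩, ?_⟩
      intro y hy
      by_cases hy' : y = xj/3
      · rw [hy']
      · exact (main_half hc hmono hhalf.le hj1 hy hy' (hne2 y)).le
  · intro hlow
    have hne2 : ∀ x : ℝ, ¬(xj = 1/2 ∧ x = 1/6) := by
      rintro x ⟨h, -⟩; rw [h] at hlow; linarith
    ext x
    simp only [mem_setOf_eq, mem_singleton_iff]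
    constructor
    · rintro ⟨hxI, hmax⟩
      by_contra hne
      have h1 := main_low hc hmono hj0 hlow.le hxI hne (hne2 x)
      have h2 := hmax ((2+xj)/3) ⟨by linarith, by linarith⟩
      linarith
    · intro hx
      subst hx
      refine ⟨⟨by linarith, by linarith⟩, ?_⟩
      intro y hy
      by_cases hy' : y = (2+xj)/3
      · rw [hy']
      · exact (main_low hc hmono hj0 hlow.le hy hy' (hne2 y)).le
  · intro heq
    subst heq
    have h56 : U c (5/6) (1/2) = U c (1/6) (1/2) := by
      rw [U_reflect c (5/6) (1/2)]
      norm_num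
    have hopt : ∀ x : ℝ, x ∈ Icc (0:ℝ) 1 → x ≠ 1/6 → x ≠ 5/6 →
        U c x (1/2) < U c (1/6) (1/2) := by
      intro x hx h1 h2
      have := main_half hc hmono (xj := 1/2) (x := x) (le_refl _) (by norm_num) hx
        (by intro h; apply h1; rw [h]; norm_num) (by rintro ⟨-, h⟩; exact h2 h)
      convert this using 2
      norm_num
    ext x
    simp only [mem_setOf_eq, mem_insert_iff, mem_singleton_iff]
    constructor
    · rintro ⟨hxI, hmax⟩
      by_contra hne
      push_neg at hne
      have h1 := hopt x hxI hne.1 hne.2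
      have h2 := hmax (1/6) ⟨by norm_num, by norm_num⟩
      linarith
    · rintro (hx | hx) <;> subst hx <;>
        refine ⟨⟨by norm_num, by norm_num⟩, ?_⟩ <;> intro y hy
      · by_cases hy1 : y = 1/6
        · rw [hy1]
        · by_cases hy2 : y = 5/6
          · rw [hy2, h56]
          · exact (hopt y hy hy1 hy2).le
      · rw [h56]
        by_cases hy1 : y = 1/6
        · rw [hy1]
        · by_cases hy2 : y = 5/6
          · rw [hy2, h56]
          · exact (hopt y hy hy1 hy2).le
end
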